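/- The reference interaction reproduces the extra statistics (two parties): let |e⟩ = sin(π/8)|0⟩ + cos(π/8)|1⟩ (the +1 eigenvector of (X−Z)/√2), |+⟩ = (|0⟩+|1⟩)/√2, and ψ = 𝒰 (|e⟩ ⊗ |+⟩) ∈ ℂ² ⊗ ℂ². Then ⟨ψ| (I₂ ⊗ X) |ψ⟩ = 1 and ⟨ψ| (Z ⊗ I₂) |ψ⟩ = −1 (in fact ψ = |1⟩ ⊗ |+⟩). -/

import Mathlib

/-!
The reference interaction reproduces the extra statistics (two parties):
for `ψ = 𝒰 (|e⟩ ⊗ |+⟩)` one has `⟨ψ| (I ⊗ X) |ψ⟩ = 1`, `⟨ψ| (Z ⊗ I) |ψ⟩ = −1`,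
and in fact `ψ = |1⟩ ⊗ |+⟩`.
-/

open Matrix Finset
open scoped Matrix Kronecker ComplexOrder

noncomputable section

def PauliX : Matrix (Fin 2) (Fin 2) ℂ := !![0, 1; 1, 0]

def PauliZ : Matrix (Fin 2) (Fin 2) ℂ := !![1, 0; 0, -1]

/-- The Bell state `|φ_{a,b}⟩ = (|a b⟩ + (−1)^a |1−a, 1−b⟩)/√2`. -/
def bellVec (a b : Fin 2) : Fin 2 × Fin 2 → ℂ := fun p =>
  (Real.sqrt 2 : ℂ)⁻¹ *
    ((if p = (a, b) then 1 else 0) +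
      (-1 : ℂ) ^ (a : ℕ) * (if p = (a + 1, b + 1) then 1 else 0))

/-- Computational basis vector `|a⟩` of `ℂ²`. -/
def ketF (a : Fin 2) : Fin 2 → ℂ := fun i => if i = a then 1 else 0

/-- `|0̄⟩, |1̄⟩`: the eigenvectors of `(X+Z)/√2`. -/
def barKet : Fin 2 → Fin 2 → ℂ :=
  ![![(Real.cos (Real.pi / 8) : ℂ), (Real.sin (Real.pi / 8) : ℂ)],
    ![-(Real.sin (Real.pi / 8) : ℂ), (Real.cos (Real.pi / 8) : ℂ)]]

/-- Kronecker product of two vectors in `ℂ²`. -/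
def vkron (u v : Fin 2 → ℂ) : Fin 2 × Fin 2 → ℂ := fun p => u p.1 * v p.2

/-- The reference interaction `𝒰 = Σ_{a,b} |φ_{a,b}⟩⟨ā, b|`. -/
def Umat : Matrix (Fin 2 × Fin 2) (Fin 2 × Fin 2) ℂ :=
  ∑ a : Fin 2, ∑ b : Fin 2, vecMulVec (bellVec a b) (star (vkron (barKet a) (ketF b)))

/-- `|e⟩ = sin(π/8)|0⟩ + cos(π/8)|1⟩`, the `+1` eigenvector of `(X−Z)/√2`. -/
def eKet : Fin 2 → ℂ := ![(Real.sin (Real.pi / 8) : ℂ), (Real.cos (Real.pi / 8) : ℂ)]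

/-- `|+⟩ = (|0⟩+|1⟩)/√2`. -/
def plusKet : Fin 2 → ℂ := fun _ => (Real.sqrt 2 : ℂ)⁻¹

/-!
Expanding `𝒰 = Σ |φ_{a,b}⟩⟨ā, b|` gives `ψ = Σ_{a,b} ⟨ā|e⟩⟨b|+⟩ |φ_{a,b}⟩`. All four coefficients
equal `1/2`: `⟨b|+⟩ = 1/√2`, while `⟨0̄|e⟩ = 2 sin(π/8) cos(π/8) = sin(π/4)` and
`⟨1̄|e⟩ = cos²(π/8) − sin²(π/8) = cos(π/4)`, both `1/√2`. In the uniform sum of the four Bell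
states the `|0·⟩` components cancel, leaving `ψ = |1⟩ ⊗ |+⟩`, an eigenvector of `I ⊗ X` with
eigenvalue `1` and of `Z ⊗ I` with eigenvalue `−1`.
-/

theorem star_dotProduct_mulVec_of_mulVec_eq_smul {n α : Type*} [Fintype n] [CommSemiring α]
    [Star α] {M : Matrix n n α} {ψ : n → α} {c : α} (hM : M *ᵥ ψ = c • ψ)
    (hψ : star ψ ⬝ᵥ ψ = 1) : star ψ ⬝ᵥ (M *ᵥ ψ) = c := by
  rw [hM, dotProduct_smul, hψ, smul_eq_mul, mul_one]

theorem inv_sqrt_two_mul_self : (√2 : ℂ)⁻¹ * (√2 : ℂ)⁻¹ = 2⁻¹ := by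
  rw [← mul_inv, ← Complex.ofReal_mul, Real.mul_self_sqrt zero_le_two, Complex.ofReal_ofNat]

theorem vkron_smul_left (c : ℂ) (u v : Fin 2 → ℂ) : vkron (c • u) v = c • vkron u v := by
  ext p
  simp only [vkron, Pi.smul_apply, smul_eq_mul, mul_assoc]

theorem kronecker_mulVec_vkron (A B : Matrix (Fin 2) (Fin 2) ℂ) (u v : Fin 2 → ℂ) :
    (A ⊗ₖ B) *ᵥ vkron u v = vkron (A *ᵥ u) (B *ᵥ v) := by
  ext ⟨i, j⟩
  simp only [mulVec, dotProduct, vkron, kroneckerMap_apply, Fintype.sum_prod_type,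
    Finset.sum_mul_sum]
  exact Finset.sum_congr rfl fun _ _ => Finset.sum_congr rfl fun _ _ => by ring

theorem star_vkron_dotProduct_vkron (u v u' v' : Fin 2 → ℂ) :
    star (vkron u v) ⬝ᵥ vkron u' v' = (star u ⬝ᵥ u') * (star v ⬝ᵥ v') := by
  simp only [dotProduct, vkron, Pi.star_apply, star_mul', Fintype.sum_prod_type,
    Finset.sum_mul_sum]
  exact Finset.sum_congr rfl fun _ _ => Finset.sum_congr rfl fun _ _ => by ring

theorem star_ketF_dotProduct (a : Fin 2) (v : Fin 2 → ℂ) : star (ketF a) ⬝ᵥ v = v a := by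
  simp [ketF, dotProduct]

theorem star_plusKet_dotProduct_self : star plusKet ⬝ᵥ plusKet = 1 := by
  simp only [plusKet, dotProduct, Pi.star_apply, RCLike.star_def, map_inv₀, Complex.conj_ofReal,
    Fin.sum_univ_two]
  rw [inv_sqrt_two_mul_self]
  norm_num

theorem PauliX_mulVec_plusKet : PauliX *ᵥ plusKet = plusKet := by
  ext i
  fin_cases i <;> simp [PauliX, plusKet, mulVec, dotProduct]

theorem PauliZ_mulVec_ketF_one : PauliZ *ᵥ ketF 1 = (-1 : ℂ) • ketF 1 := by
  ext i
  fin_cases i <;> simp [PauliZ, ketF, mulVec, dotProduct]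

theorem star_barKet_dotProduct_eKet (a : Fin 2) : star (barKet a) ⬝ᵥ eKet = (√2 : ℂ)⁻¹ := by
  have hsin : 2 * Real.sin (Real.pi / 8) * Real.cos (Real.pi / 8) = (√2)⁻¹ := by
    rw [← Real.sin_two_mul, show 2 * (Real.pi / 8) = Real.pi / 4 by ring, Real.sin_pi_div_four,
      Real.sqrt_div_self', one_div]
  have hcos : Real.cos (Real.pi / 8) ^ 2 - Real.sin (Real.pi / 8) ^ 2 = (√2)⁻¹ := by
    rw [← Real.cos_two_mul', show 2 * (Real.pi / 8) = Real.pi / 4 by ring,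
      Real.cos_pi_div_four, Real.sqrt_div_self', one_div]
  fin_cases a <;>
    simp only [dotProduct, Fin.sum_univ_two, barKet, eKet, Pi.star_apply, RCLike.star_def,
      Complex.conj_ofReal, map_neg, Fin.isValue, Fin.zero_eta, Fin.mk_one, cons_val_zero,
      cons_val_one, cons_val_fin_one] <;>
    rw [← Complex.ofReal_inv]
  · rw [← hsin]; push_cast; ring
  · rw [← hcos]; push_cast; ring

theorem Umat_mulVec (w : Fin 2 × Fin 2 → ℂ) :
    Umat *ᵥ w = ∑ a, ∑ b, (star (vkron (barKet a) (ketF b)) ⬝ᵥ w) • bellVec a b := by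
  simp only [Umat, sum_mulVec, vecMulVec_mulVec, op_smul_eq_smul]

theorem sum_bellVec : ∑ a, ∑ b, bellVec a b = (2 : ℂ) • vkron (ketF 1) plusKet := by
  ext ⟨i, j⟩
  fin_cases i <;> fin_cases j <;> simp [bellVec, vkron, ketF, plusKet, Fin.sum_univ_two] <;> ring

theorem Umat_mulVec_vkron_eKet_plusKet : Umat *ᵥ vkron eKet plusKet = vkron (ketF 1) plusKet := by
  have hplus (b : Fin 2) : plusKet b = (√2 : ℂ)⁻¹ := rfl
  rw [Umat_mulVec]
  simp only [star_vkron_dotProduct_vkron, star_barKet_dotProduct_eKet, star_ketF_dotProduct,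
    hplus, inv_sqrt_two_mul_self, ← Finset.smul_sum, sum_bellVec, smul_smul]
  norm_num

theorem reference_interaction_extra_statistics :
    star (Umat *ᵥ vkron eKet plusKet) ⬝ᵥ
        (((1 : Matrix (Fin 2) (Fin 2) ℂ) ⊗ₖ PauliX) *ᵥ (Umat *ᵥ vkron eKet plusKet)) = 1 ∧
    star (Umat *ᵥ vkron eKet plusKet) ⬝ᵥ
        ((PauliZ ⊗ₖ (1 : Matrix (Fin 2) (Fin 2) ℂ)) *ᵥ (Umat *ᵥ vkron eKet plusKet)) = -1 ∧
    Umat *ᵥ vkron eKet plusKet = vkron (ketF 1) plusKet := by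
  have hnorm : star (vkron (ketF 1) plusKet) ⬝ᵥ vkron (ketF 1) plusKet = 1 := by
    rw [star_vkron_dotProduct_vkron, star_ketF_dotProduct, star_plusKet_dotProduct_self]
    simp [ketF]
  rw [Umat_mulVec_vkron_eKet_plusKet]
  refine ⟨star_dotProduct_mulVec_of_mulVec_eq_smul ?_ hnorm,
    star_dotProduct_mulVec_of_mulVec_eq_smul ?_ hnorm, rfl⟩
  · rw [kronecker_mulVec_vkron, one_mulVec, PauliX_mulVec_plusKet, one_smul]
  · rw [kronecker_mulVec_vkron, one_mulVec, PauliZ_mulVec_ketF_one, vkron_smul_left]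

end
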